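/- arXiv:2004.12942 — 7 statements merged into one kernel-verified Lean document; each statement's English description precedes it below -/
import Mathlib

section
/- For every n ≥ 1: (a) every Boolean function with exactly n influencing variables requires every decision tree computing it to have depth at least ⌈log₂(n+1)⌉; and (b) there exists a Boolean function on n variables, all of whose variables are influencing, that is computed by a decision tree of depth ⌈log₂(n+1)⌉. Hence the minimum deterministic query complexity DQ_n over all Boolean functions with n influencing variables equals ⌈log₂(n+1)⌉. -/
/-- A deterministic decision tree over `n` Boolean variables: either a leaf
labelled by a `Bool`, or an internal node querying a variable with two subtrees. -/
inductive DTree (n : ℕ) where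
  | leaf : Bool → DTree n
  | node : Fin n → DTree n → DTree n → DTree n

namespace DTree

/-- Evaluation of a decision tree on an input. -/
def eval {n : ℕ} : DTree n → (Fin n → Bool) → Bool
  | leaf b, _ => b
  | node i t0 t1, x => if x i then eval t1 x else eval t0 x

/-- The depth of a decision tree: the maximum number of internal nodes on a
root-to-leaf path. -/
def depth {n : ℕ} : DTree n → ℕ
  | leaf _ => 0
  | node _ t0 t1 => max (depth t0) (depth t1) + 1

/-- A decision tree computes `f` if its evaluation agrees with `f` on all inputs. -/
def Computes {n : ℕ} (T : DTree n) (f : (Fin n → Bool) → Bool) : Prop :=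
  ∀ x, T.eval x = f x

end DTree

/-- Variable `i` is influencing for `f`: there are inputs differing only in
coordinate `i` on which `f` takes different values. -/
def Influences {n : ℕ} (f : (Fin n → Bool) → Bool) (i : Fin n) : Prop :=
  ∃ x x' : Fin n → Bool, (∀ j, j ≠ i → x j = x' j) ∧ f x ≠ f x'

/-!
A tree of depth `d` queries at most `2 ^ d - 1` distinct variables, and a variable it never
queries cannot influence the function it computes; this is the lower bound. For the upper bound,
query the variables in a balanced tree, labelling the leaves so that at every node the two
subtrees disagree on the all-`false` input and no variable is queried twice on a path. Then the
variable at any node influences the result: fix the variables above it so as to reach that node,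
and those below it to `false`.
-/

theorem Influences.of_comp_update {n : ℕ} {f g : (Fin n → Bool) → Bool} {i j : Fin n}
    {v : Bool} (h : Influences f j) (hg : ∀ x, g (Function.update x i v) = f x) :
    Influences g j := by
  obtain ⟨x, x', hxx', hne⟩ := h
  refine ⟨Function.update x i v, Function.update x' i v, fun k hk => ?_, by rwa [hg, hg]⟩
  by_cases hki : k = i
  · simp [hki]
  · simp [Function.update_of_ne hki, hxx' k hk]

namespace DTree

variable {n : ℕ}

def vars : DTree n → Finset (Fin n)
  | leaf _ => ∅
  | node i t0 t1 => insert i (vars t0 ∪ vars t1)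

theorem card_vars_lt_two_pow (T : DTree n) : T.vars.card < 2 ^ T.depth := by
  induction T with
  | leaf b => simp [vars, depth]
  | node i t0 t1 ih0 ih1 =>
    have hcard : (node i t0 t1).vars.card ≤ t0.vars.card + t1.vars.card + 1 :=
      (Finset.card_insert_le _ _).trans (by grw [Finset.card_union_le])
    have h0 : 2 ^ t0.depth ≤ 2 ^ max t0.depth t1.depth :=
      Nat.pow_le_pow_right two_pos (le_max_left ..)
    have h1 : 2 ^ t1.depth ≤ 2 ^ max t0.depth t1.depth :=
      Nat.pow_le_pow_right two_pos (le_max_right ..)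
    rw [depth, pow_succ]
    omega

theorem eval_congr_vars (T : DTree n) {x y : Fin n → Bool} (h : ∀ j ∈ T.vars, x j = y j) :
    T.eval x = T.eval y := by
  induction T with
  | leaf b => rfl
  | node i t0 t1 ih0 ih1 =>
    simp only [vars, Finset.mem_insert, Finset.mem_union] at h
    simp only [eval, h i (.inl rfl), ih0 fun j hj => h j (.inr (.inl hj)),
      ih1 fun j hj => h j (.inr (.inr hj))]

theorem mem_vars_of_influences {T : DTree n} {i : Fin n} (h : Influences T.eval i) :
    i ∈ T.vars := by
  obtain ⟨x, x', hxx', hne⟩ := h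
  by_contra hi
  exact hne (T.eval_congr_vars fun j hj => hxx' j (ne_of_mem_of_not_mem hj hi))

theorem eval_update_of_not_mem_vars {T : DTree n} {i : Fin n} (hi : i ∉ T.vars)
    (x : Fin n → Bool) (v : Bool) : T.eval (Function.update x i v) = T.eval x :=
  T.eval_congr_vars fun _ hj => Function.update_of_ne (ne_of_mem_of_not_mem hj hi) _ _

def Separating : DTree n → Prop
  | leaf _ => True
  | node i t0 t1 => i ∉ t0.vars ∧ i ∉ t1.vars ∧
      t0.eval (fun _ => false) ≠ t1.eval (fun _ => false) ∧ t0.Separating ∧ t1.Separating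

theorem Separating.influences {T : DTree n} (hT : T.Separating) {j : Fin n} (hj : j ∈ T.vars) :
    Influences T.eval j := by
  induction T with
  | leaf b => simp [vars] at hj
  | node i t0 t1 ih0 ih1 =>
    obtain ⟨hi0, hi1, hroot, hs0, hs1⟩ := hT
    simp only [vars, Finset.mem_insert, Finset.mem_union] at hj
    rcases hj with rfl | hj0 | hj1
    · refine ⟨fun _ => false, Function.update (fun _ => false) j true,
        fun k hk => by simp [Function.update_of_ne hk], ?_⟩
      simpa [eval, eval_update_of_not_mem_vars hi1] using hroot
    · exact (ih0 hs0 hj0).of_comp_update (i := i) (v := false) fun x => by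
        simp [eval, eval_update_of_not_mem_vars hi0]
    · exact (ih1 hs1 hj1).of_comp_update (i := i) (v := true) fun x => by
        simp [eval, eval_update_of_not_mem_vars hi1]

def balanced (b : Bool) : List (Fin n) → DTree n
  | [] => leaf b
  | i :: l =>
    node i (balanced b (l.take ((l.length + 1) / 2))) (balanced (!b) (l.drop ((l.length + 1) / 2)))
termination_by l => l.length

theorem eval_balanced_false (b : Bool) (l : List (Fin n)) :
    (balanced b l).eval (fun _ => false) = b := by
  fun_induction balanced <;> simp_all [eval]

theorem vars_balanced (b : Bool) (l : List (Fin n)) : (balanced b l).vars = l.toFinset := by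
  fun_induction balanced with
  | case1 => rfl
  | case2 b i l ih0 ih1 =>
    rw [vars, ih0, ih1, ← List.toFinset_append, List.take_append_drop, List.toFinset_cons]

theorem separating_balanced (b : Bool) {l : List (Fin n)} (hl : l.Nodup) :
    (balanced b l).Separating := by
  fun_induction balanced with
  | case1 => trivial
  | case2 b i l ih0 ih1 =>
    obtain ⟨hi, hl⟩ := List.nodup_cons.mp hl
    refine ⟨?_, ?_, ?_, ih0 (hl.sublist (List.take_sublist ..)),
      ih1 (hl.sublist (List.drop_sublist ..))⟩
    · simpa [vars_balanced] using fun h => hi (List.mem_of_mem_take h)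
    · simpa [vars_balanced] using fun h => hi (List.mem_of_mem_drop h)
    · simp [eval_balanced_false]

theorem depth_balanced (b : Bool) (l : List (Fin n)) :
    (balanced b l).depth = Nat.clog 2 (l.length + 1) := by
  fun_induction balanced with
  | case1 => simp [depth]
  | case2 b i l ih0 ih1 =>
    have hmono : Nat.clog 2 (l.length - (l.length + 1) / 2 + 1) ≤
        Nat.clog 2 ((l.length + 1) / 2 + 1) :=
      Nat.clog_mono_right _ (by omega)
    have hclog : Nat.clog 2 (l.length + 2) = Nat.clog 2 ((l.length + 1) / 2 + 1) + 1 := by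
      rw [Nat.clog_of_two_le one_lt_two (by omega)]
      congr 2
      omega
    simp only [depth, ih0, ih1, List.length_take, List.length_drop, List.length_cons]
    rw [min_eq_left (by omega), max_eq_left hmono, hclog]

end DTree

theorem stmt2_general (n : ℕ) :
    (∀ f : (Fin n → Bool) → Bool, (∀ i, Influences f i) →
      ∀ T : DTree n, T.Computes f → Nat.clog 2 (n + 1) ≤ T.depth) ∧
    (∃ f : (Fin n → Bool) → Bool, (∀ i, Influences f i) ∧
      ∃ T : DTree n, T.Computes f ∧ T.depth = Nat.clog 2 (n + 1)) := by
  refine ⟨fun f hf T hT => ?_, ?_⟩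
  · have hvars : T.vars = Finset.univ := Finset.eq_univ_of_forall fun i =>
      DTree.mem_vars_of_influences (by simpa [funext hT] using hf i)
    have hcard := T.card_vars_lt_two_pow
    rw [hvars, Finset.card_univ, Fintype.card_fin] at hcard
    exact Nat.clog_le_of_le_pow hcard
  · let T := DTree.balanced false (List.finRange n)
    have hT : T.Separating := DTree.separating_balanced false (List.nodup_finRange n)
    refine ⟨T.eval, fun i => hT.influences ?_, T, fun _ => rfl, ?_⟩
    · simp [T, DTree.vars_balanced]
    · simp [T, DTree.depth_balanced]

/-- (a) any function with `n` influencing variables needs decision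
trees of depth at least `⌈log₂ (n+1)⌉ = Nat.clog 2 (n+1)`, and (b) some
function on `n` variables, all influencing, is computed by a decision tree of
exactly this depth.  Hence `DQ_n = ⌈log₂ (n+1)⌉`. -/
theorem stmt2 (n : ℕ) (hn : 1 ≤ n) :
    (∀ f : (Fin n → Bool) → Bool, (∀ i, Influences f i) →
      ∀ T : DTree n, T.Computes f → Nat.clog 2 (n + 1) ≤ T.depth) ∧
    (∃ f : (Fin n → Bool) → Bool, (∀ i, Influences f i) ∧
      ∃ T : DTree n, T.Computes f ∧ T.depth = Nat.clog 2 (n + 1)) :=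
  stmt2_general n
end

section
/- Let k ≥ 1 and let f be a Boolean function on 2^k − 1 variables, all of whose variables are influencing, that is computed by a decision tree of depth k. Then there exist k distinct indices i_1, …, i_k, a Boolean e, and an assignment of constant Boolean values to the remaining 2^k − 1 − k variables such that the corresponding restriction of f equals the function z ↦ e XOR (z_{i_1} AND z_{i_2} AND … AND z_{i_k}); that is, f restricts to the k-variable AND function or its negation (the k-variable OR up to relabelling). -/
theorem List.card_le_length_of_forall_mem {α : Type*} [Fintype α] {l : List α}
    (hmem : ∀ a, a ∈ l) : Fintype.card α ≤ l.length := by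
  rw [← Finset.card_univ, ← Finset.length_toList]
  exact (Finset.univ.nodup_toList.subperm fun a _ => hmem a).length_le

theorem List.nodup_of_forall_mem_of_length_le {α : Type*} [Fintype α] {l : List α}
    (hmem : ∀ a, a ∈ l) (hlen : l.length ≤ Fintype.card α) : l.Nodup := by
  classical
  have hcard := List.card_le_length_of_forall_mem fun a => List.mem_dedup.2 (hmem a)
  rw [← (List.dedup_sublist l).eq_of_length_le (hlen.trans hcard)]
  exact List.nodup_dedup l

theorem Influences.surjective {n : ℕ} {f : (Fin n → Bool) → Bool} {i : Fin n}
    (h : Influences f i) : Function.Surjective f := by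
  obtain ⟨x, x', -, hne⟩ := h
  intro e
  by_cases hx : f x = e
  · exact ⟨x, hx⟩
  · exact ⟨x', by revert hne hx; cases f x <;> cases f x' <;> cases e <;> simp⟩

namespace DTree

variable {n : ℕ}

def varsList : DTree n → List (Fin n)
  | leaf _ => []
  | node i t0 t1 => i :: (varsList t0 ++ varsList t1)

inductive IsPerfect : DTree n → ℕ → Prop
  | leaf (b : Bool) : IsPerfect (.leaf b) 0
  | node (i : Fin n) (t0 t1 : DTree n) (k : ℕ) :
      IsPerfect t0 k → IsPerfect t1 k → IsPerfect (.node i t0 t1) (k + 1)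

theorem eval_congr (T : DTree n) {x x' : Fin n → Bool}
    (h : ∀ j ∈ T.varsList, x j = x' j) : T.eval x = T.eval x' := by
  induction T with
  | leaf b => rfl
  | node i t0 t1 ih0 ih1 =>
    simp only [varsList, List.mem_cons, List.mem_append] at h
    simp only [eval, h i (.inl rfl)]
    split
    · exact ih1 fun j hj => h j (.inr (.inr hj))
    · exact ih0 fun j hj => h j (.inr (.inl hj))

theorem mem_varsList_of_influences {T : DTree n} {i : Fin n} (h : Influences T.eval i) :
    i ∈ T.varsList := by
  by_contra hi
  obtain ⟨x, x', hxx', hne⟩ := h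
  exact hne (T.eval_congr fun j hj => hxx' j fun hji => hi (hji ▸ hj))

theorem length_varsList_add_one_le (T : DTree n) : T.varsList.length + 1 ≤ 2 ^ T.depth := by
  induction T with
  | leaf b => simp [varsList, depth]
  | node i t0 t1 ih0 ih1 =>
    have h0 := Nat.pow_le_pow_right two_pos (le_max_left t0.depth t1.depth)
    have h1 := Nat.pow_le_pow_right two_pos (le_max_right t0.depth t1.depth)
    simp only [varsList, depth, List.length_cons, List.length_append, pow_succ]
    omega

theorem isPerfect_of_length_varsList {T : DTree n} {k : ℕ} (hdepth : T.depth ≤ k)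
    (hlen : T.varsList.length + 1 = 2 ^ k) : T.IsPerfect k := by
  induction T generalizing k with
  | leaf b =>
    obtain rfl : k = 0 := by simpa [varsList, eq_comm (a := 1)] using hlen
    exact .leaf b
  | node i t0 t1 ih0 ih1 =>
    obtain ⟨m, rfl⟩ : ∃ m, k = m + 1 := ⟨k - 1, by simp only [depth] at hdepth; omega⟩
    simp only [depth, add_le_add_iff_right, max_le_iff] at hdepth
    have h0 := t0.length_varsList_add_one_le.trans (Nat.pow_le_pow_right two_pos hdepth.1)
    have h1 := t1.length_varsList_add_one_le.trans (Nat.pow_le_pow_right two_pos hdepth.2)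
    simp only [varsList, List.length_cons, List.length_append, pow_succ] at hlen
    exact .node i t0 t1 m (ih0 hdepth.1 (by omega)) (ih1 hdepth.2 (by omega))

theorem influences_left_of_influences_node {j i : Fin n} {t0 t1 : DTree n}
    (h : Influences (node j t0 t1).eval i) (hij : i ≠ j) (hi : i ∉ t1.varsList) :
    Influences t0.eval i := by
  obtain ⟨x, x', hxx', hne⟩ := h
  simp only [eval, hxx' j hij.symm] at hne
  cases hxj : x' j
  · simp only [hxj, Bool.false_eq_true, if_false] at hne
    exact ⟨x, x', hxx', hne⟩
  · simp only [hxj, if_true] at hne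
    exact absurd (t1.eval_congr fun v hv => hxx' v fun hvi => hi (hvi ▸ hv)) hne

theorem influences_right_of_influences_node {j i : Fin n} {t0 t1 : DTree n}
    (h : Influences (node j t0 t1).eval i) (hij : i ≠ j) (hi : i ∉ t0.varsList) :
    Influences t1.eval i := by
  obtain ⟨x, x', hxx', hne⟩ := h
  simp only [eval, hxx' j hij.symm] at hne
  cases hxj : x' j
  · simp only [hxj, Bool.false_eq_true, if_false] at hne
    exact absurd (t0.eval_congr fun v hv => hxx' v fun hvi => hi (hvi ▸ hv)) hne
  · simp only [hxj, if_true] at hne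
    exact ⟨x, x', hxx', hne⟩

theorem eq_not_of_influences_node_leaf {j i : Fin n} {b0 b1 : Bool}
    (h : Influences (node j (leaf b0) (leaf b1)).eval i) : b0 = !b1 := by
  obtain ⟨x, x', -, hne⟩ := h
  simp only [eval] at hne
  split_ifs at hne <;> cases b0 <;> cases b1 <;> simp_all

theorem IsPerfect.exists_restrict_eq_xor_and {T : DTree n} {k : ℕ} (hT : T.IsPerfect k)
    (hnd : T.varsList.Nodup) (hinf : ∀ i ∈ T.varsList, Influences T.eval i) :
    ∃ idx : Fin k → Fin n, Function.Injective idx ∧ (∀ t, idx t ∈ T.varsList) ∧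
      ∃ (e : Bool) (c : Fin n → Bool), ∀ x,
        (∀ v ∈ T.varsList, (∀ t, idx t ≠ v) → x v = c v) →
          T.eval x = xor e (decide (∀ t, x (idx t) = true)) := by
  induction hT with
  | leaf b =>
    exact ⟨Fin.elim0, fun t => t.elim0, fun t => t.elim0, !b, fun _ => b,
      fun x _ => by simp [eval]⟩
  | node j t0 t1 k hp0 hp1 _ ih1 =>
    simp only [varsList, List.nodup_cons, List.nodup_append, List.mem_append, not_or] at hnd
    obtain ⟨⟨hj0, hj1⟩, -, hnd1, hdisj⟩ := hnd
    have hinf1 : ∀ i ∈ t1.varsList, Influences t1.eval i := fun i hi =>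
      influences_right_of_influences_node (hinf i (by simp [varsList, hi]))
        (by rintro rfl; exact hj1 hi) fun hi0 => hdisj i hi0 i hi rfl
    obtain ⟨idx, hinj, hmem, e, c, h1⟩ := ih1 hnd1 hinf1
    obtain ⟨y, hy⟩ : ∃ y, t0.eval y = e := by
      cases hp0 with
      | leaf b0 =>
        cases hp1 with
        | leaf b1 =>
        have he : b1 = !e := by simpa [eval] using h1 c (by simp [varsList])
        have hb := eq_not_of_influences_node_leaf (hinf j (by simp [varsList]))
        exact ⟨c, by simp [eval, hb, he]⟩
      | node i s0 s1 _ _ _ =>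
        refine Influences.surjective (influences_left_of_influences_node (hinf i ?_) ?_ ?_) e
        · simp [varsList]
        · rintro rfl; simp [varsList] at hj0
        · exact fun hi1 => hdisj i (by simp [varsList]) i hi1 rfl
    refine ⟨Fin.cons j idx,
      Fin.cons_injective_of_injective (fun ⟨t, ht⟩ => hj1 (ht ▸ hmem t)) hinj,
      Fin.cases (by simp [varsList]) (fun t => by simp [varsList, hmem t]), e,
      fun v => if v ∈ t0.varsList then y v else c v, fun x hx => ?_⟩
    simp only [varsList, List.mem_cons, List.mem_append, Fin.forall_fin_succ, Fin.cons_zero,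
      Fin.cons_succ] at hx
    simp only [eval, Fin.forall_fin_succ, Fin.cons_zero, Fin.cons_succ]
    cases hxj : x j
    · simp only [Bool.false_eq_true, if_false, false_and, decide_false, Bool.xor_false, ← hy]
      refine t0.eval_congr fun v hv => ?_
      have hxv := hx v (.inr (.inl hv))
        ⟨fun h => hj0 (h ▸ hv), fun t h => hdisj v hv v (h ▸ hmem t) rfl⟩
      rwa [if_pos hv] at hxv
    · simp only [if_true, true_and]
      refine h1 x fun v hv hvt => ?_
      have hxv := hx v (.inr (.inr hv)) ⟨fun h => hj1 (h ▸ hv), hvt⟩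
      rwa [if_neg fun h0 => hdisj v h0 v hv rfl] at hxv

end DTree

theorem stmt3_general (k : ℕ) (f : (Fin (2 ^ k - 1) → Bool) → Bool)
    (hinf : ∀ i, Influences f i)
    (T : DTree (2 ^ k - 1)) (hdepth : T.depth = k) (hcomp : T.Computes f) :
    ∃ idx : Fin k → Fin (2 ^ k - 1), Function.Injective idx ∧
      ∃ (e : Bool) (c : Fin (2 ^ k - 1) → Bool),
        ∀ x : Fin (2 ^ k - 1) → Bool,
          (∀ v, (∀ t, idx t ≠ v) → x v = c v) →
          f x = xor e (decide (∀ t, x (idx t) = true)) := by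
  obtain rfl : T.eval = f := funext hcomp
  have hmem : ∀ i, i ∈ T.varsList := fun i => DTree.mem_varsList_of_influences (hinf i)
  have hle := T.length_varsList_add_one_le
  have hge := List.card_le_length_of_forall_mem hmem
  rw [hdepth] at hle
  rw [Fintype.card_fin] at hge
  have hlen : T.varsList.length + 1 = 2 ^ k := by omega
  have hnd : T.varsList.Nodup :=
    List.nodup_of_forall_mem_of_length_le hmem (by rw [Fintype.card_fin]; omega)
  have hperf : T.IsPerfect k := DTree.isPerfect_of_length_varsList hdepth.le hlen
  obtain ⟨idx, hinj, -, e, c, h⟩ := hperf.exists_restrict_eq_xor_and hnd fun i _ => hinf i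
  exact ⟨idx, hinj, e, c, fun x hx => h x fun v _ => hx v⟩

/-- any Boolean function on `2^k - 1` variables, all influencing,
computed by a depth-`k` decision tree, restricts (after fixing the remaining
variables to constants `c`) to `z ↦ e XOR (z_{i_1} AND ... AND z_{i_k})` on
some `k` distinct variables. -/
theorem stmt3 (k : ℕ) (hk : 1 ≤ k) (f : (Fin (2 ^ k - 1) → Bool) → Bool)
    (hinf : ∀ i, Influences f i)
    (T : DTree (2 ^ k - 1)) (hdepth : T.depth = k) (hcomp : T.Computes f) :
    ∃ idx : Fin k → Fin (2 ^ k - 1), Function.Injective idx ∧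
      ∃ (e : Bool) (c : Fin (2 ^ k - 1) → Bool),
        ∀ x : Fin (2 ^ k - 1) → Bool,
          (∀ v, (∀ t, idx t ≠ v) → x v = c v) →
          f x = xor e (decide (∀ t, x (idx t) = true)) :=
  stmt3_general k f hinf T hdepth hcomp
end

section
/- For every k ≥ 1 there exists a Boolean function f on 2^{k+1} − 2 variables, all of whose variables are influencing, such that f is computed by a parity decision tree of depth k and f admits a restriction (fixing all but k variables to constants) that is isomorphic to the k-variable AND. -/
/-- A parity decision tree over `n` Boolean variables: either a leaf labelled
by a `Bool`, or an internal node querying a single variable `x i` or the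
parity `x i XOR x j` of two variables, with two subtrees. -/
inductive PDTree (n : ℕ) where
  | leaf : Bool → PDTree n
  | node1 : Fin n → PDTree n → PDTree n → PDTree n
  | node2 : Fin n → Fin n → PDTree n → PDTree n → PDTree n

namespace PDTree

/-- Evaluation of a parity decision tree on an input. -/
def eval {n : ℕ} : PDTree n → (Fin n → Bool) → Bool
  | leaf b, _ => b
  | node1 i t0 t1, x => if x i then eval t1 x else eval t0 x
  | node2 i j t0 t1, x => if xor (x i) (x j) then eval t1 x else eval t0 x

/-- The depth of a parity decision tree. -/
def depth {n : ℕ} : PDTree n → ℕ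
  | leaf _ => 0
  | node1 _ t0 t1 => max (depth t0) (depth t1) + 1
  | node2 _ _ t0 t1 => max (depth t0) (depth t1) + 1

/-- A parity decision tree computes `f` if its evaluation agrees with `f`. -/
def Computes {n : ℕ} (P : PDTree n) (f : (Fin n → Bool) → Bool) : Prop :=
  ∀ x, P.eval x = f x

end PDTree


/-!
The function is a complete binary tree of parities. `branch g h` queries `x a ⊕ x b` on two
fresh variables and continues with `h` on one block of fresh variables if the parity is `1`
and with `g` on another block if it is `0`; starting from `x a ⊕ x b` (the branch of the two
constants on no variables) and iterating `f ↦ branch f f` gives `2 ^ (k + 1) - 2` variables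
and a parity decision tree of depth `k`. A variable of a block influences the result because
it influences that block's copy; `a` and `b` influence it because `f` is not constant, so the
two blocks can be set to disagree. For the `AND` restriction, fix `x b = 0` and the `0`-block
to an input on which `f` takes the value `e` of its own `AND` restriction `e ⊕ AND(…)` on the
`1`-block: the result is then `e ⊕ (x a ∧ AND(…))`.
-/

namespace PDTree

def map {n m : ℕ} (σ : Fin n → Fin m) : PDTree n → PDTree m
  | leaf b => leaf b
  | node1 i t0 t1 => node1 (σ i) (t0.map σ) (t1.map σ)
  | node2 i j t0 t1 => node2 (σ i) (σ j) (t0.map σ) (t1.map σ)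

variable {n m : ℕ} (σ : Fin n → Fin m)

@[simp]
theorem eval_map (P : PDTree n) (x : Fin m → Bool) : (P.map σ).eval x = P.eval (x ∘ σ) := by
  induction P <;> simp_all [map, eval]

@[simp]
theorem depth_map (P : PDTree n) : (P.map σ).depth = P.depth := by
  induction P <;> simp_all [map, depth]

end PDTree

theorem influences_iff_exists_update {n : ℕ} {f : (Fin n → Bool) → Bool} {i : Fin n} :
    Influences f i ↔ ∃ x b, f (Function.update x i b) ≠ f x := by
  constructor
  · rintro ⟨x, x', hagree, hne⟩
    have hx' : Function.update x i (x' i) = x' := by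
      ext j
      by_cases hj : j = i
      · subst hj; simp
      · simp [hj, hagree j hj]
    exact ⟨x, x' i, by rw [hx']; exact hne.symm⟩
  · rintro ⟨x, b, hne⟩
    exact ⟨_, x, fun j hj => Function.update_of_ne hj _ _, hne⟩

theorem Influences.exists_eq {n : ℕ} {f : (Fin n → Bool) → Bool} {i : Fin n}
    (h : Influences f i) (e : Bool) : ∃ x, f x = e := by
  obtain ⟨x, x', -, hne⟩ := h
  by_cases hx : f x = e
  · exact ⟨x, hx⟩
  · exact ⟨x', by cases e <;> cases hx' : f x' <;> simp_all⟩

def HasAndRestriction {n : ℕ} (f : (Fin n → Bool) → Bool) (k : ℕ) (e : Bool) : Prop :=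
  ∃ idx : Fin k → Fin n, Function.Injective idx ∧ ∃ (d : Fin k → Bool) (c : Fin n → Bool),
    ∀ x : Fin n → Bool, (∀ v, (∀ t, idx t ≠ v) → x v = c v) →
      f x = xor e (decide (∀ t, xor (x (idx t)) (d t) = true))

namespace ParityBranch

variable {n : ℕ}

def leftVar (j : Fin n) : Fin (n + n + 2) := Fin.castAdd 2 (Fin.castAdd n j)

def rightVar (j : Fin n) : Fin (n + n + 2) := Fin.castAdd 2 (Fin.natAdd n j)

def fstQuery : Fin (n + n + 2) := Fin.natAdd (n + n) 0

def sndQuery : Fin (n + n + 2) := Fin.natAdd (n + n) 1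

theorem forall_var_iff {P : Fin (n + n + 2) → Prop} :
    (∀ i, P i) ↔ (∀ j, P (leftVar j)) ∧ (∀ j, P (rightVar j)) ∧ P fstQuery ∧ P sndQuery := by
  simp only [Fin.forall_fin_add, Fin.forall_fin_two, leftVar, rightVar, fstQuery, sndQuery,
    and_assoc]

theorem leftVar_injective : Function.Injective (leftVar : Fin n → Fin (n + n + 2)) := by
  intro j j' h; simpa [leftVar, Fin.ext_iff] using h

theorem rightVar_injective : Function.Injective (rightVar : Fin n → Fin (n + n + 2)) := by
  intro j j' h; simpa [rightVar, Fin.ext_iff] using h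

@[simp] theorem rightVar_ne_leftVar (j j' : Fin n) : rightVar j ≠ leftVar j' := by
  simp [rightVar, leftVar, Fin.ext_iff]; omega

@[simp] theorem fstQuery_ne_leftVar (j : Fin n) : fstQuery ≠ leftVar j := by
  simp [fstQuery, leftVar, Fin.ext_iff]; omega

@[simp] theorem sndQuery_ne_leftVar (j : Fin n) : sndQuery ≠ leftVar j := by
  simp [sndQuery, leftVar, Fin.ext_iff]; omega

@[simp] theorem fstQuery_ne_rightVar (j : Fin n) : fstQuery ≠ rightVar j := by
  simp [fstQuery, rightVar, Fin.ext_iff]; omega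

@[simp] theorem sndQuery_ne_rightVar (j : Fin n) : sndQuery ≠ rightVar j := by
  simp [sndQuery, rightVar, Fin.ext_iff]; omega

@[simp] theorem fstQuery_ne_sndQuery : (fstQuery : Fin (n + n + 2)) ≠ sndQuery := by
  simp [fstQuery, sndQuery, Fin.ext_iff]

def glue (y z : Fin n → Bool) (p q : Bool) : Fin (n + n + 2) → Bool :=
  Fin.append (Fin.append y z) ![p, q]

@[simp] theorem glue_leftVar (y z : Fin n → Bool) (p q : Bool) (j : Fin n) :
    glue y z p q (leftVar j) = y j := by
  simp [glue, leftVar]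

@[simp] theorem glue_rightVar (y z : Fin n → Bool) (p q : Bool) (j : Fin n) :
    glue y z p q (rightVar j) = z j := by
  simp only [glue, rightVar, Fin.append_left, Fin.append_right]

@[simp] theorem glue_comp_leftVar (y z : Fin n → Bool) (p q : Bool) :
    glue y z p q ∘ leftVar = y :=
  funext (glue_leftVar y z p q)

@[simp] theorem glue_comp_rightVar (y z : Fin n → Bool) (p q : Bool) :
    glue y z p q ∘ rightVar = z :=
  funext (glue_rightVar y z p q)

@[simp] theorem glue_fstQuery (y z : Fin n → Bool) (p q : Bool) : glue y z p q fstQuery = p := by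
  simp [glue, fstQuery]

@[simp] theorem glue_sndQuery (y z : Fin n → Bool) (p q : Bool) : glue y z p q sndQuery = q := by
  simp [glue, sndQuery]

def branch (g h : (Fin n → Bool) → Bool) (x : Fin (n + n + 2) → Bool) : Bool :=
  if xor (x fstQuery) (x sndQuery) then h (x ∘ rightVar) else g (x ∘ leftVar)

theorem computes_branch {g h : (Fin n → Bool) → Bool} {P Q : PDTree n} (hP : P.Computes g)
    (hQ : Q.Computes h) :
    (PDTree.node2 fstQuery sndQuery (P.map leftVar) (Q.map rightVar)).Computes (branch g h) := by
  intro x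
  simp [PDTree.eval, branch, hP (x ∘ leftVar), hQ (x ∘ rightVar)]

theorem influences_branch {g h : (Fin n → Bool) → Bool} (hg : ∀ j, Influences g j)
    (hh : ∀ j, Influences h j) (hgh : ∃ y z, g y ≠ h z) : ∀ i, Influences (branch g h) i := by
  simp only [forall_var_iff, influences_iff_exists_update]
  obtain ⟨y, z, hyz⟩ := hgh
  refine ⟨fun j => ?_, fun j => ?_, ?_, ?_⟩
  · obtain ⟨x, b, hx⟩ := influences_iff_exists_update.1 (hg j)
    refine ⟨glue x x false false, b, ?_⟩
    simpa [branch, Function.update_comp_eq_of_injective _ leftVar_injective,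
      Function.update_of_ne (fstQuery_ne_leftVar j),
      Function.update_of_ne (sndQuery_ne_leftVar j)]
      using hx
  · obtain ⟨x, b, hx⟩ := influences_iff_exists_update.1 (hh j)
    refine ⟨glue x x true false, b, ?_⟩
    simpa [branch, Function.update_comp_eq_of_injective _ rightVar_injective,
      Function.update_of_ne (fstQuery_ne_rightVar j),
      Function.update_of_ne (sndQuery_ne_rightVar j)]
      using hx
  · refine ⟨glue y z false false, true, ?_⟩
    simpa [branch, Function.update_of_ne fstQuery_ne_sndQuery.symm,
      Function.update_comp_eq_of_forall_ne _ _ fun j => (fstQuery_ne_leftVar j).symm,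
      Function.update_comp_eq_of_forall_ne _ _ fun j => (fstQuery_ne_rightVar j).symm]
      using hyz.symm
  · refine ⟨glue y z false false, true, ?_⟩
    simpa [branch, Function.update_of_ne fstQuery_ne_sndQuery,
      Function.update_comp_eq_of_forall_ne _ _ fun j => (sndQuery_ne_leftVar j).symm,
      Function.update_comp_eq_of_forall_ne _ _ fun j => (sndQuery_ne_rightVar j).symm]
      using hyz.symm

theorem hasAndRestriction_branch {g h : (Fin n → Bool) → Bool} {k : ℕ} {e : Bool}
    (hh : HasAndRestriction h k e) (hg : ∃ y, g y = e) :
    HasAndRestriction (branch g h) (k + 1) e := by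
  obtain ⟨idx, hidx, d, c, hc⟩ := hh
  obtain ⟨y, hy⟩ := hg
  refine ⟨Fin.cons fstQuery (rightVar ∘ idx), ?_, Fin.cons false d, glue y c false false,
    fun x hx => ?_⟩
  · exact Fin.cons_injective_iff.2
      ⟨fun ⟨t, ht⟩ => fstQuery_ne_rightVar _ ht.symm, rightVar_injective.comp hidx⟩
  have hfixed : ∀ v, fstQuery ≠ v → (∀ t, rightVar (idx t) ≠ v) →
      x v = glue y c false false v := fun v h0 hs =>
    hx v (Fin.forall_fin_succ.2 ⟨h0, hs⟩)
  have hsnd : x sndQuery = false := by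
    simpa using hfixed sndQuery fstQuery_ne_sndQuery fun t => (sndQuery_ne_rightVar _).symm
  have hleft : x ∘ leftVar = y := by
    ext j
    simpa using hfixed (leftVar j) (fstQuery_ne_leftVar j) fun t => rightVar_ne_leftVar _ j
  have hright : h (x ∘ rightVar) = xor e (decide (∀ t, xor (x (rightVar (idx t))) (d t) = true)) :=
    hc _ fun v hv => by
      simpa using hfixed (rightVar v) (fstQuery_ne_rightVar v) fun t => rightVar_injective.ne (hv t)
  simp only [branch, hsnd, hleft, hy, hright, Bool.xor_false, Fin.forall_fin_succ, Fin.cons_zero,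
    Fin.cons_succ, Function.comp_apply]
  cases x fstQuery <;> simp

end ParityBranch

open ParityBranch

def IsAndWitness {n : ℕ} (k : ℕ) (f : (Fin n → Bool) → Bool) : Prop :=
  (∀ i, Influences f i) ∧ (∃ P : PDTree n, P.depth = k ∧ P.Computes f) ∧
    ∃ e, HasAndRestriction f k e

theorem isAndWitness_one :
    IsAndWitness 1 (branch (fun _ : Fin 0 → Bool => false) fun _ => true) :=
  ⟨influences_branch (fun j => j.elim0) (fun j => j.elim0) ⟨![], ![], Bool.false_ne_true⟩,
    ⟨.node2 (fstQuery (n := 0)) (sndQuery (n := 0)) (.leaf false) (.leaf true), rfl, fun _ => rfl⟩,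
    false, hasAndRestriction_branch ⟨Fin.elim0, fun t => t.elim0, ![], ![], fun _ _ => rfl⟩
      ⟨![], rfl⟩⟩

theorem IsAndWitness.branch {n k : ℕ} [NeZero n] {f : (Fin n → Bool) → Bool}
    (hf : IsAndWitness k f) : IsAndWitness (k + 1) (branch f f) := by
  obtain ⟨hinf, ⟨P, hdepth, hP⟩, e, he⟩ := hf
  obtain ⟨x, x', -, hne⟩ := hinf 0
  exact ⟨influences_branch hinf hinf ⟨x, x', hne⟩,
    ⟨_, by simp [PDTree.depth, hdepth], computes_branch hP hP⟩,
    e, hasAndRestriction_branch he ((hinf 0).exists_eq e)⟩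

theorem exists_isAndWitness (k : ℕ) (hk : 1 ≤ k) :
    ∃ f : (Fin (2 ^ (k + 1) - 2) → Bool) → Bool, IsAndWitness k f := by
  induction k, hk using Nat.le_induction with
  | base => exact ⟨_, isAndWitness_one⟩
  | succ k hk ih =>
    obtain ⟨f, hf⟩ := ih
    have hpow : 2 ^ 2 ≤ 2 ^ (k + 1) := Nat.pow_le_pow_right two_pos (by omega)
    have : NeZero (2 ^ (k + 1) - 2) := ⟨by omega⟩
    have hcard : 2 ^ (k + 1 + 1) - 2 = (2 ^ (k + 1) - 2) + (2 ^ (k + 1) - 2) + 2 := by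
      rw [pow_succ]; omega
    rw [hcard]
    exact ⟨_, hf.branch⟩

/-- for every `k ≥ 1` there is a Boolean function on
`2^(k+1) - 2` variables, all influencing, computed by a parity decision tree
of depth `k`, which admits a restriction isomorphic to `AND_k`. -/
theorem stmt6 (k : ℕ) (hk : 1 ≤ k) :
    ∃ f : (Fin (2 ^ (k + 1) - 2) → Bool) → Bool,
      (∀ i, Influences f i) ∧
      (∃ P : PDTree (2 ^ (k + 1) - 2), P.depth = k ∧ P.Computes f) ∧
      ∃ idx : Fin k → Fin (2 ^ (k + 1) - 2), Function.Injective idx ∧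
        ∃ (e : Bool) (d : Fin k → Bool) (c : Fin (2 ^ (k + 1) - 2) → Bool),
          ∀ x : Fin (2 ^ (k + 1) - 2) → Bool,
            (∀ v, (∀ t, idx t ≠ v) → x v = c v) →
            f x = xor e (decide (∀ t, xor (x (idx t)) (d t) = true)) := by
  obtain ⟨f, hinf, hP, e, idx, hidx, d, c, hf⟩ := exists_isAndWitness k hk
  exact ⟨f, hinf, hP, idx, hidx, e, d, c, hf⟩
end

section
/- For every k ≥ 2 and every n with 2^{k−1} − 1 < n ≤ 2^{k−1} + 2^{k−2} − 1, there exists a Boolean function f on n variables, all of whose variables are influencing, such that: f is computed by a parity decision tree of depth k − 1; f is computed by a deterministic decision tree of depth k; and f admits a restriction (fixing all but k − 1 of its variables to constants) isomorphic to the (k−1)-variable AND. In particular every deterministic decision tree computing f has depth exactly k while f has a depth-(k−1) parity decision tree. -/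
/-!
Let `d = k - 2`. The function is a complete read-once decision tree of depth `d` whose `2 ^ d`
leaves are fresh variables, except that the leftmost `m ≥ 1` leaves are XORs of two fresh
variables; it has `2 ^ (d + 1) - 1 + m` variables, all influencing. One parity query evaluates
an XOR leaf, so the parity depth is `d + 1`, and two ordinary queries do, so the deterministic
depth is at most `d + 2`. The all-zero input reaches the leftmost (XOR) leaf and has value `0`;
no set of `d + 1` variables fixes this value: if the set misses a variable on the leftmost
path, move into a subtree that can still output `1`, otherwise it misses one variable of the
XOR. Setting every variable outside the leftmost path and the first variable of its leaf to `0`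
leaves an AND of `d + 1` literals.
-/

open Function

def Influential {ι : Type*} (F : (ι → Bool) → Bool) (i : ι) : Prop :=
  ∃ x x' : ι → Bool, (∀ j, j ≠ i → x j = x' j) ∧ F x ≠ F x'

theorem Influential.of_branch {ι : Type*} [DecidableEq ι] {F G : (ι → Bool) → Bool}
    {s i : ι} {b : Bool} (hFG : ∀ x, x s = b → F x = G x) (hG : ∀ x, G (update x s b) = G x)
    (hi : Influential G i) : Influential F i := by
  obtain ⟨x, x', hxx', hne⟩ := hi
  refine ⟨update x s b, update x' s b, fun j hj => ?_, ?_⟩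
  · simp only [update_apply]
    split_ifs
    · rfl
    · exact hxx' j hj
  · rwa [hFG _ (update_self ..), hFG _ (update_self ..), hG, hG]

namespace PDTree

def toDTree {n : ℕ} : PDTree n → DTree n
  | leaf b => .leaf b
  | node1 i t0 t1 => .node i t0.toDTree t1.toDTree
  | node2 i j t0 t1 => .node i (.node j t0.toDTree t1.toDTree) (.node j t1.toDTree t0.toDTree)

theorem eval_toDTree {n : ℕ} (P : PDTree n) (x : Fin n → Bool) :
    P.toDTree.eval x = P.eval x := by
  induction P with
  | leaf b => rfl
  | node1 i t0 t1 ih0 ih1 => simp [toDTree, DTree.eval, eval, ih0, ih1]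
  | node2 i j t0 t1 ih0 ih1 =>
    cases hi : x i <;> cases hj : x j <;> simp [toDTree, DTree.eval, eval, ih0, ih1, hi, hj]

end PDTree

namespace DTree

variable {n : ℕ}

/-- `S` is the set of variables queried on the path of `x`. -/
theorem exists_card_le_depth_eval_eq (T : DTree n) (x : Fin n → Bool) :
    ∃ S : Finset (Fin n), S.card ≤ T.depth ∧
      ∀ y, (∀ i ∈ S, y i = x i) → T.eval y = T.eval x := by
  induction T with
  | leaf b => exact ⟨∅, by simp [depth], fun y _ => rfl⟩
  | node i t0 t1 ih0 ih1 =>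
    obtain ⟨S, hcard, hS⟩ : ∃ S : Finset (Fin n), S.card ≤ max t0.depth t1.depth ∧
        ∀ y, (∀ j ∈ S, y j = x j) →
          (if x i then t1.eval y else t0.eval y) = if x i then t1.eval x else t0.eval x := by
      cases x i
      · obtain ⟨S, hcard, hS⟩ := ih0
        exact ⟨S, hcard.trans (le_max_left _ _), by simpa using hS⟩
      · obtain ⟨S, hcard, hS⟩ := ih1
        exact ⟨S, hcard.trans (le_max_right _ _), by simpa using hS⟩
    refine ⟨insert i S, (Finset.card_insert_le i S).trans (by simp [depth, hcard]),
      fun y hy => ?_⟩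
    simp only [eval, hy i (Finset.mem_insert_self i S)]
    exact hS y fun j hj => hy j (Finset.mem_insert_of_mem hj)

theorem le_depth_of_forall_card_lt {f : (Fin n → Bool) → Bool} {x : Fin n → Bool} {D : ℕ}
    (h : ∀ S : Finset (Fin n), S.card < D → ∃ y, (∀ i ∈ S, y i = x i) ∧ f y ≠ f x)
    {T : DTree n} (hT : T.Computes f) : D ≤ T.depth := by
  by_contra! hlt
  obtain ⟨S, hcard, hS⟩ := T.exists_card_le_depth_eval_eq x
  obtain ⟨y, hyS, hne⟩ := h S (by omega)
  exact hne (by rw [← hT, ← hT]; exact hS y hyS)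

end DTree

def treeSize (d m : ℕ) : ℕ := 2 ^ (d + 1) - 1 + m

/-- The read-once tree of depth `d` with `m` XOR leaves on the variables `s, s + 1, …,
s + treeSize d m - 1`, numbered in preorder: the root is `s`, the left subtree gets the first
`min m (2 ^ d)` XOR leaves. -/
def treeFnAt : ℕ → ℕ → ℕ → (ℕ → Bool) → Bool
  | 0, 0, s, x => x s
  | 0, _ + 1, s, x => xor (x s) (x (s + 1))
  | d + 1, m, s, x =>
    if x s then treeFnAt d (m - min m (2 ^ d)) (s + 1 + treeSize d (min m (2 ^ d))) x
    else treeFnAt d (min m (2 ^ d)) (s + 1) x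

section treeFnAt

variable {d m s : ℕ} {x : ℕ → Bool}

theorem treeSize_succ (d m : ℕ) :
    treeSize (d + 1) m = 1 + treeSize d (min m (2 ^ d)) + treeSize d (m - min m (2 ^ d)) := by
  have : 1 ≤ 2 ^ d := Nat.one_le_two_pow
  simp only [treeSize, pow_succ]
  omega

theorem lt_treeSize (d m : ℕ) : d < treeSize d m := by
  have := Nat.lt_two_pow_self (n := d + 1)
  simp only [treeSize]
  omega

theorem treeFnAt_succ_of_false (h : x s = false) :
    treeFnAt (d + 1) m s x = treeFnAt d (min m (2 ^ d)) (s + 1) x := by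
  simp [treeFnAt, h]

theorem treeFnAt_succ_of_true (h : x s = true) :
    treeFnAt (d + 1) m s x =
      treeFnAt d (m - min m (2 ^ d)) (s + 1 + treeSize d (min m (2 ^ d))) x := by
  simp [treeFnAt, h]

theorem treeFnAt_congr {y : ℕ → Bool}
    (h : ∀ i, s ≤ i → i < s + treeSize d m → x i = y i) :
    treeFnAt d m s x = treeFnAt d m s y := by
  induction d generalizing m s with
  | zero =>
    have hs := h s le_rfl (by simp [treeSize])
    rcases m with _ | m
    · simpa [treeFnAt] using hs
    · simp [treeFnAt, hs, h (s + 1) (by omega) (by simp [treeSize])]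
  | succ d ih =>
    have := treeSize_succ d m
    cases hs : x s
    · rw [treeFnAt_succ_of_false hs, treeFnAt_succ_of_false (h s le_rfl (by omega) ▸ hs)]
      exact ih fun i h1 h2 => h i (by omega) (by omega)
    · rw [treeFnAt_succ_of_true hs, treeFnAt_succ_of_true (h s le_rfl (by omega) ▸ hs)]
      exact ih fun i h1 h2 => h i (by omega) (by omega)

theorem treeFnAt_eq_false (h : ∀ i, s ≤ i → i < s + treeSize d m → x i = false) :
    treeFnAt d m s x = false := by
  induction d generalizing m s with
  | zero =>
    rcases m with _ | m
    · simpa [treeFnAt] using h s le_rfl (by simp [treeSize])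
    · simp [treeFnAt, h s le_rfl (by simp [treeSize]), h (s + 1) (by omega) (by simp [treeSize])]
  | succ d ih =>
    have := treeSize_succ d m
    rw [treeFnAt_succ_of_false (h s le_rfl (by omega))]
    exact ih fun i h1 h2 => h i (by omega) (by omega)

theorem treeFnAt_eq_and (h : ∀ i, s + d < i → i < s + treeSize d m → x i = false) :
    treeFnAt d m s x = decide (∀ t : Fin (d + 1), x (s + t) = decide (t = Fin.last d)) := by
  induction d generalizing m s with
  | zero =>
    rcases m with _ | m
    · simp [treeFnAt]
    · simp [treeFnAt, h (s + 1) (by omega) (by simp [treeSize])]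
  | succ d ih =>
    have := treeSize_succ d m
    have := lt_treeSize d (min m (2 ^ d))
    cases hs : x s
    · rw [treeFnAt_succ_of_false hs, ih fun i h1 h2 => h i (by omega) (by omega),
        decide_eq_decide, Fin.forall_fin_succ (n := d + 1)]
      simp [hs, Fin.ext_iff, add_assoc, add_comm 1]
    · rw [treeFnAt_succ_of_true hs, treeFnAt_eq_false fun i h1 h2 => h i (by omega) (by omega)]
      symm
      simpa using ⟨0, by simp [hs, Fin.ext_iff]⟩

theorem treeFnAt_eq_true_of_single_leftmost_leaf
    (h : ∀ i, s ≤ i → i < s + treeSize d m → x i = decide (i = s + d)) :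
    treeFnAt d m s x = true := by
  rw [treeFnAt_eq_and fun i h1 h2 => by rw [h i (by omega) h2]; simp; omega]
  have := lt_treeSize d m
  simp only [decide_eq_true_eq, Fin.ext_iff, Fin.val_last]
  intro t
  rw [h _ (by omega) (by omega)]
  simp

/-- `x` is the indicator of the first leaf variable of the right subtree. -/
theorem exists_treeFnAt_succ_root_flip (d m s : ℕ) :
    ∃ x : ℕ → Bool,
      (∀ i, s ≤ i → i < s + 1 + treeSize d (min m (2 ^ d)) → x i = false) ∧
      treeFnAt (d + 1) m s x = false ∧ treeFnAt (d + 1) m s (update x s true) = true := by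
  set p := s + 1 + treeSize d (min m (2 ^ d))
  refine ⟨fun i => decide (i = p + d), fun i h1 h2 => by simp; omega, ?_, ?_⟩
  · rw [treeFnAt_succ_of_false (by simp; omega)]
    exact treeFnAt_eq_false fun i h1 h2 => by simp; omega
  · rw [treeFnAt_succ_of_true (update_self ..)]
    exact treeFnAt_eq_true_of_single_leftmost_leaf fun i h1 h2 => by rw [update_of_ne (by omega)]

theorem influential_treeFnAt (hm : m ≤ 2 ^ d) {i : ℕ} (hi1 : s ≤ i)
    (hi2 : i < s + treeSize d m) :
    Influential (treeFnAt d m s) i := by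
  induction d generalizing m s with
  | zero =>
    refine ⟨fun _ => false, fun j => decide (j = i), fun j hj => by simp [hj], ?_⟩
    obtain rfl | rfl : m = 0 ∨ m = 1 := by omega
    · obtain rfl : i = s := by simp [treeSize] at hi2; omega
      simp [treeFnAt]
    · obtain rfl | rfl : i = s ∨ i = s + 1 := by simp [treeSize] at hi2; omega
      all_goals simp [treeFnAt]
  | succ d ih =>
    have := treeSize_succ d m
    have : 2 ^ (d + 1) = 2 * 2 ^ d := pow_succ' 2 d
    rcases show i = s ∨ s < i ∧ i < s + 1 + treeSize d (min m (2 ^ d)) ∨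
        s + 1 + treeSize d (min m (2 ^ d)) ≤ i by omega with rfl | hleft | hright
    · obtain ⟨x, -, h0, h1⟩ := exists_treeFnAt_succ_root_flip d m i
      refine ⟨x, update x i true, fun j hj => (update_of_ne hj ..).symm, ?_⟩
      simp [h0, h1]
    · refine Influential.of_branch (b := false) (fun _ hs => treeFnAt_succ_of_false hs)
        (fun x => treeFnAt_congr fun j h1 _ => update_of_ne (by omega) ..) ?_
      exact ih (min_le_right _ _) hleft.1 hleft.2
    · refine Influential.of_branch (b := true) (fun _ hs => treeFnAt_succ_of_true hs)
        (fun x => treeFnAt_congr fun j h1 _ => update_of_ne (by omega) ..) ?_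
      exact ih (by omega) hright (by omega)

/-- If `S` lies inside the left subtree, flip the root; otherwise `S` meets the left subtree
in at most `d + 1` variables and we recurse there. -/
theorem exists_treeFnAt_eq_true_of_card_lt (hm : 1 ≤ m) (S : Finset ℕ) (hS : S.card < d + 2) :
    ∃ y : ℕ → Bool, (∀ i ∈ S, y i = false) ∧ treeFnAt d m s y = true := by
  induction d generalizing m s S with
  | zero =>
    obtain ⟨m, rfl⟩ : ∃ m', m = m' + 1 := ⟨m - 1, by omega⟩
    obtain hs | hs : s ∉ S ∨ s + 1 ∉ S := by
      by_contra! h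
      have := Finset.card_le_card (Finset.insert_subset h.1 (Finset.singleton_subset_iff.2 h.2))
      rw [Finset.card_pair (by omega)] at this
      omega
    · exact ⟨fun j => decide (j = s), fun i hi => by simp; rintro rfl; exact hs hi,
        by simp [treeFnAt]⟩
    · exact ⟨fun j => decide (j = s + 1), fun i hi => by simp; rintro rfl; exact hs hi,
        by simp [treeFnAt]⟩
  | succ d ih =>
    set left : ℕ → Prop := fun i => s < i ∧ i < s + 1 + treeSize d (min m (2 ^ d))
    by_cases hSL : (S.filter left).card = S.card
    · obtain ⟨x, hx, -, hx1⟩ := exists_treeFnAt_succ_root_flip d m s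
      have hSL := Finset.card_filter_eq_iff.1 hSL
      refine ⟨update x s true, fun i hi => ?_, hx1⟩
      obtain ⟨his, hi'⟩ := hSL i hi
      rw [update_of_ne his.ne']
      exact hx i his.le hi'
    · have hcard := (Finset.card_filter_le S left).lt_of_ne hSL
      obtain ⟨y, hy, hy1⟩ := ih (m := min m (2 ^ d)) (s := s + 1)
        (le_min hm Nat.one_le_two_pow) (S.filter left) (by omega)
      refine ⟨fun i => decide (left i) && y i, fun i hi => ?_, ?_⟩
      · by_cases h : left i
        · simp [h, hy i (Finset.mem_filter.2 ⟨hi, h⟩)]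
        · simp [h]
      · rw [treeFnAt_succ_of_false (by simp [left]), ← hy1]
        exact treeFnAt_congr fun i h1 h2 => by simp [left]; omega

end treeFnAt

def treePDTree {n : ℕ} (v : ℕ → Fin n) : ℕ → ℕ → ℕ → PDTree n
  | 0, 0, s => .node1 (v s) (.leaf false) (.leaf true)
  | 0, _ + 1, s => .node2 (v s) (v (s + 1)) (.leaf false) (.leaf true)
  | d + 1, m, s =>
    .node1 (v s) (treePDTree v d (min m (2 ^ d)) (s + 1))
      (treePDTree v d (m - min m (2 ^ d)) (s + 1 + treeSize d (min m (2 ^ d))))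

section treePDTree

variable {n : ℕ} (v : ℕ → Fin n)

theorem eval_treePDTree (d m s : ℕ) (x : Fin n → Bool) :
    (treePDTree v d m s).eval x = treeFnAt d m s (x ∘ v) := by
  induction d generalizing m s with
  | zero =>
    rcases m with _ | m
    · simp [treePDTree, PDTree.eval, treeFnAt]
    · simp only [treePDTree, PDTree.eval, treeFnAt, comp_apply]
      cases x (v s) <;> cases x (v (s + 1)) <;> rfl
  | succ d ih => simp [treePDTree, PDTree.eval, treeFnAt, ih]

theorem depth_treePDTree (d m s : ℕ) : (treePDTree v d m s).depth = d + 1 := by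
  induction d generalizing m s with
  | zero => rcases m with _ | m <;> rfl
  | succ d ih => simp [treePDTree, PDTree.depth, ih]

theorem depth_toDTree_treePDTree (d m s : ℕ) :
    (treePDTree v d m s).toDTree.depth = d + 1 + min m 1 := by
  induction d generalizing m s with
  | zero => rcases m with _ | m <;> simp [treePDTree, PDTree.toDTree, DTree.depth]
  | succ d ih =>
    have : 1 ≤ 2 ^ d := Nat.one_le_two_pow
    simp only [treePDTree, PDTree.toDTree, DTree.depth, ih]
    omega

end treePDTree

def treeFn (d m : ℕ) (x : Fin (treeSize d m) → Bool) : Bool :=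
  treeFnAt d m 0 fun i => if h : i < treeSize d m then x ⟨i, h⟩ else false

section treeFn

variable {d m : ℕ}

instance : NeZero (treeSize d m) := ⟨(Nat.zero_le d).trans_lt (lt_treeSize d m) |>.ne'⟩

theorem treeFn_eq_treeFnAt {x : Fin (treeSize d m) → Bool} {X : ℕ → Bool}
    (h : ∀ i : Fin (treeSize d m), X i = x i) : treeFn d m x = treeFnAt d m 0 X :=
  treeFnAt_congr fun i _ hi => by
    rw [zero_add] at hi
    rw [dif_pos hi]
    exact (h ⟨i, hi⟩).symm

theorem influences_treeFn (hm : m ≤ 2 ^ d) (i : Fin (treeSize d m)) :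
    Influences (treeFn d m) i := by
  obtain ⟨X, X', hXX', hne⟩ := influential_treeFnAt hm (Nat.zero_le i) (by simp)
  refine ⟨fun j => X j, fun j => X' j, fun j hj => hXX' j (Fin.val_injective.ne hj), ?_⟩
  rwa [treeFn_eq_treeFnAt (fun _ => rfl), treeFn_eq_treeFnAt (fun _ => rfl)]

theorem treePDTree_computes_treeFn :
    (treePDTree (Fin.ofNat (treeSize d m)) d m 0).Computes (treeFn d m) := fun x => by
  rw [eval_treePDTree, treeFn_eq_treeFnAt]
  intro i
  simp

theorem treeFn_eq_and {x : Fin (treeSize d m) → Bool}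
    (hx : ∀ i : Fin (treeSize d m), d < i → x i = false) :
    treeFn d m x = decide (∀ t : Fin (d + 1),
      x (Fin.castLE (lt_treeSize d m) t) = decide (t = Fin.last d)) := by
  have := lt_treeSize d m
  rw [treeFn, treeFnAt_eq_and fun i h1 h2 => by
    rw [zero_add] at h1 h2
    rw [dif_pos h2, hx ⟨i, h2⟩ h1]]
  simp only [zero_add, decide_eq_decide]
  exact forall_congr' fun t => by rw [dif_pos (by have := t.isLt; omega)]; rfl

theorem le_depth_of_computes_treeFn (hm : 1 ≤ m) {T : DTree (treeSize d m)}
    (hT : T.Computes (treeFn d m)) : d + 2 ≤ T.depth := by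
  refine DTree.le_depth_of_forall_card_lt (x := fun _ => false) (fun S hS => ?_) hT
  obtain ⟨y, hy, hy1⟩ := exists_treeFnAt_eq_true_of_card_lt (s := 0) hm (S.map Fin.valEmbedding)
    (by simpa using hS)
  refine ⟨fun i => y i, fun i hi => hy i (Finset.mem_map_of_mem _ hi), ?_⟩
  rw [treeFn_eq_treeFnAt (fun _ => rfl), treeFn_eq_treeFnAt (X := fun _ => false) (fun _ => rfl),
    hy1, treeFnAt_eq_false fun _ _ _ => rfl]
  decide

end treeFn

/-- for `2^(k-1) - 1 < n ≤ 2^(k-1) + 2^(k-2) - 1` there is a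
Boolean function on `n` variables, all influencing, computed by a parity
decision tree of depth `k - 1` and by a deterministic decision tree of depth
`k`, admitting a restriction isomorphic to `AND_(k-1)`; moreover every
deterministic decision tree computing it has depth at least `k` (hence the
deterministic complexity is exactly `k`). -/
theorem stmt10 (k n : ℕ) (hk : 2 ≤ k)
    (h1 : 2 ^ (k - 1) - 1 < n) (h2 : n ≤ 2 ^ (k - 1) + 2 ^ (k - 2) - 1) :
    ∃ f : (Fin n → Bool) → Bool,
      (∀ i, Influences f i) ∧
      (∃ P : PDTree n, P.depth = k - 1 ∧ P.Computes f) ∧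
      (∃ T : DTree n, T.depth = k ∧ T.Computes f) ∧
      (∃ idx : Fin (k - 1) → Fin n, Function.Injective idx ∧
        ∃ (e : Bool) (d : Fin (k - 1) → Bool) (c : Fin n → Bool),
          ∀ x : Fin n → Bool,
            (∀ v, (∀ t, idx t ≠ v) → x v = c v) →
            f x = xor e (decide (∀ t, xor (x (idx t)) (d t) = true))) ∧
      (∀ T : DTree n, T.Computes f → k ≤ T.depth) := by
  obtain ⟨d, rfl⟩ : ∃ d, k = d + 2 := ⟨k - 2, by omega⟩
  obtain ⟨m, rfl, hm1, hm2⟩ : ∃ m, n = treeSize d m ∧ 1 ≤ m ∧ m ≤ 2 ^ d := by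
    have : 2 ^ (d + 1) = 2 * 2 ^ d := pow_succ' 2 d
    refine ⟨n - (2 ^ (d + 1) - 1), ?_⟩
    simp only [treeSize, show d + 2 - 1 = d + 1 from rfl, Nat.add_sub_cancel] at h1 h2 ⊢
    omega
  set P := treePDTree (Fin.ofNat (treeSize d m)) d m 0
  refine ⟨treeFn d m, influences_treeFn hm2,
    ⟨P, depth_treePDTree .., treePDTree_computes_treeFn⟩,
    ⟨P.toDTree, by rw [depth_toDTree_treePDTree]; omega,
      fun x => by rw [PDTree.eval_toDTree]; exact treePDTree_computes_treeFn x⟩,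
    ⟨Fin.castLE (lt_treeSize d m), Fin.castLE_injective _, false,
      fun t => !decide (t = Fin.last d), fun _ => false, fun x hx => ?_⟩,
    fun T => le_depth_of_computes_treeFn hm1⟩
  rw [treeFn_eq_and fun i hi => hx i fun t ht => by rw [← ht] at hi; simp at hi; omega,
    Bool.false_xor]
  congr 1
  refine propext (forall_congr' fun t => ?_)
  cases x (Fin.castLE (lt_treeSize d m) t) <;> by_cases h : t = Fin.last d <;> simp [h]
end

section
/- Let m ≥ 1 and let f be a Maiorana–McFarland bent function on n = 2m variables, i.e. f(x, y) = (XOR over those i : Fin m with φ(x) i = true of y i) XOR h(x) where φ : (Fin m → Bool) → (Fin m → Bool) is a bijection and h : (Fin m → Bool) → Bool is arbitrary. Then every decision tree computing f has depth at least n = 2m; i.e. the deterministic query complexity of f equals n. -/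
/-- XOR over those coordinates `i` with `a i = true` of `y i`, expressed as the
parity of the number of coordinates where both `a` and `y` are true. -/
def parityDot {m : ℕ} (a y : Fin m → Bool) : Bool :=
  decide (Odd ((Finset.univ.filter (fun i : Fin m => a i = true ∧ y i = true)).card))

/-- The Maiorana–McFarland function `f(x, y) = φ(x)·y XOR h(x)` on `m + m`
variables, where the first `m` coordinates form `x` and the last `m` form `y`. -/
def MMBent {m : ℕ} (φ : (Fin m → Bool) → (Fin m → Bool))
    (h : (Fin m → Bool) → Bool) (z : Fin (m + m) → Bool) : Bool :=
  xor (parityDot (φ (fun i => z (Fin.castAdd m i))) (fun i => z (Fin.natAdd m i)))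
      (h (fun i => z (Fin.castAdd m i)))

/-!
Write `χ(z) = ∏ᵢ (-1)^{zᵢ}` and `f̂ = ∑_z (-1)^{f z} χ(z)`, the top Fourier coefficient of `f`
up to the factor `2⁻ⁿ`. If a tree `T` has depth `< n`, then `T̂ = 0`: splitting the cube along
the queried variables, each leaf is reached on a subcube with a free coordinate, and flipping
that coordinate negates `χ`. For `f(x, y) = φ(x)·y ⊕ h(x)` the sum over `y` of
`(-1)^{φ(x)·y} χ(y)` vanishes unless `φ(x)` is all-ones, where it is `2^m`; as `φ` is bijective
exactly one `x` contributes, so `f̂ = ±2^m ≠ 0`.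
-/

open Finset

def toSign (b : Bool) : ℤ := if b then -1 else 1

lemma toSign_ne_zero (b : Bool) : toSign b ≠ 0 := by cases b <;> decide

lemma toSign_xor (a b : Bool) : toSign (xor a b) = toSign a * toSign b := by
  cases a <;> cases b <;> rfl

lemma toSign_not (b : Bool) : toSign (!b) = -toSign b := by cases b <;> rfl

lemma toSign_decide_odd (k : ℕ) : toSign (decide (Odd k)) = (-1) ^ k := by
  rcases Nat.even_or_odd k with hk | hk
  · simp [toSign, hk.neg_one_pow, Nat.not_odd_iff_even.mpr hk]
  · simp [toSign, hk.neg_one_pow, hk]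

section Parity

variable {ι : Type*} [Fintype ι] [DecidableEq ι]

def parityChar (z : ι → Bool) : ℤ := ∏ i, toSign (z i)

def parityCorrelation (f : (ι → Bool) → Bool) : ℤ := ∑ z, toSign (f z) * parityChar z

lemma parityChar_update_not (z : ι → Bool) (i : ι) :
    parityChar (Function.update z i (!z i)) = -parityChar z := by
  rw [parityChar, parityChar, ← mul_prod_erase _ _ (mem_univ i),
    ← mul_prod_erase _ _ (mem_univ i), Function.update_self, toSign_not, neg_mul]
  congr 2
  exact prod_congr rfl fun j hj => by rw [Function.update_of_ne (ne_of_mem_erase hj)]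

def subcube (A : Finset ι) (a : ι → Bool) : Finset (ι → Bool) :=
  univ.filter fun z => ∀ i ∈ A, z i = a i

lemma mem_subcube {A : Finset ι} {a z : ι → Bool} : z ∈ subcube A a ↔ ∀ i ∈ A, z i = a i := by
  simp [subcube]

@[simp] lemma subcube_empty (a : ι → Bool) : subcube ∅ a = univ := by
  simp [subcube]

lemma filter_subcube_apply_eq {A : Finset ι} {i : ι} (hi : i ∉ A) (a : ι → Bool) (b : Bool) :
    (subcube A a).filter (fun z => z i = b) = subcube (insert i A) (Function.update a i b) := by
  ext z
  simp only [mem_filter, mem_subcube, forall_mem_insert, Function.update_self]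
  rw [and_comm]
  refine and_congr_right fun _ => forall₂_congr fun j hj => ?_
  rw [Function.update_of_ne (ne_of_mem_of_not_mem hj hi)]

lemma sum_subcube_parityChar_eq_zero {A : Finset ι} {i : ι} (hi : i ∉ A) (a : ι → Bool) :
    ∑ z ∈ subcube A a, parityChar z = 0 := by
  let σ : (ι → Bool) → (ι → Bool) := fun z => Function.update z i (!z i)
  have σ_σ : ∀ z, σ (σ z) = z := fun z => by simp [σ]
  have σ_mem : ∀ z ∈ subcube A a, σ z ∈ subcube A a := fun z hz => by
    rw [mem_subcube] at hz ⊢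
    intro j hj
    simp only [σ]
    rw [Function.update_of_ne (ne_of_mem_of_not_mem hj hi), hz j hj]
  have hneg : ∑ z ∈ subcube A a, parityChar z = ∑ z ∈ subcube A a, -parityChar z :=
    sum_nbij' σ σ σ_mem σ_mem (fun z _ => σ_σ z) (fun z _ => σ_σ z)
      fun z _ => by rw [parityChar_update_not, neg_neg]
  rw [sum_neg_distrib] at hneg
  omega

end Parity

lemma toSign_parityDot {m : ℕ} (a y : Fin m → Bool) :
    toSign (parityDot a y) = ∏ i, if a i then toSign (y i) else 1 := by
  have : ∀ i, (if a i then toSign (y i) else 1) = if a i = true ∧ y i = true then -1 else 1 :=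
    fun i => by cases a i <;> cases y i <;> rfl
  simp only [this, prod_ite, prod_const, one_pow, mul_one, parityDot, toSign_decide_odd]

lemma sum_toSign_parityDot_mul_parityChar {m : ℕ} (a : Fin m → Bool) :
    ∑ y, toSign (parityDot a y) * parityChar y = if a = fun _ => true then 2 ^ m else 0 := by
  have hterm : ∀ y, toSign (parityDot a y) * parityChar y =
      ∏ i, if a i then 1 else toSign (y i) := fun y => by
    rw [toSign_parityDot, parityChar, ← prod_mul_distrib]
    exact prod_congr rfl fun i _ => by cases a i <;> cases y i <;> rfl
  rw [sum_congr rfl fun y _ => hterm y,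
    ← Fintype.prod_sum fun i (b : Bool) => if a i then 1 else toSign b]
  have hfactor : ∀ i, ∑ b : Bool, (if a i then 1 else toSign b) = if a i then 2 else 0 :=
    fun i => by cases a i <;> rfl
  simp only [hfactor]
  split_ifs with htop
  · simp [htop]
  · obtain ⟨i, hi⟩ : ∃ i, a i = false := by
      by_contra! hall
      exact htop (funext fun i => by simpa using hall i)
    exact prod_eq_zero (mem_univ i) (by simp [hi])

lemma MMBent_append {m : ℕ} (φ : (Fin m → Bool) → (Fin m → Bool)) (h : (Fin m → Bool) → Bool)
    (x y : Fin m → Bool) : MMBent φ h (Fin.append x y) = xor (parityDot (φ x) y) (h x) := by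
  simp only [MMBent, Fin.append_left, Fin.append_right]

lemma parityChar_append {m n : ℕ} (x : Fin m → Bool) (y : Fin n → Bool) :
    parityChar (Fin.append x y) = parityChar x * parityChar y := by
  simp [parityChar, Fin.prod_univ_add]

lemma parityCorrelation_MMBent_ne_zero {m : ℕ} {φ : (Fin m → Bool) → (Fin m → Bool)}
    (hφ : Function.Bijective φ) (h : (Fin m → Bool) → Bool) :
    parityCorrelation (MMBent φ h) ≠ 0 := by
  obtain ⟨x₀, hx₀⟩ := hφ.surjective fun _ => true
  have hsplit : parityCorrelation (MMBent φ h) =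
      ∑ x, toSign (h x) * parityChar x * ∑ y, toSign (parityDot (φ x) y) * parityChar y := by
    rw [parityCorrelation, ← (Fin.appendEquiv (α := Bool) m m).sum_comp, Fintype.sum_prod_type]
    refine sum_congr rfl fun x _ => ?_
    rw [mul_sum]
    refine sum_congr rfl fun y _ => ?_
    change toSign (MMBent φ h (Fin.append x y)) * parityChar (Fin.append x y) = _
    rw [MMBent_append, parityChar_append, toSign_xor]
    ring
  simp only [hsplit, sum_toSign_parityDot_mul_parityChar, ← hx₀, hφ.injective.eq_iff,
    mul_ite, mul_zero, Fintype.sum_ite_eq']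
  exact mul_ne_zero (mul_ne_zero (toSign_ne_zero _) (prod_ne_zero_iff.mpr fun i _ =>
    toSign_ne_zero _)) (pow_ne_zero _ two_ne_zero)

namespace DTree

lemma eval_node_of_apply_eq {n : ℕ} {i : Fin n} {t₀ t₁ : DTree n} {z : Fin n → Bool} {b : Bool}
    (hz : z i = b) : (node i t₀ t₁).eval z = (cond b t₁ t₀).eval z := by
  cases b <;> simp [eval, hz]

lemma sum_subcube_toSign_eval_mul_parityChar_eq_zero {n : ℕ} (T : DTree n) {A : Finset (Fin n)}
    (a : Fin n → Bool) (hT : T.depth + #A < n) :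
    ∑ z ∈ subcube A a, toSign (T.eval z) * parityChar z = 0 := by
  induction T generalizing A a with
  | leaf b =>
    obtain ⟨i, hi⟩ : ∃ i, i ∉ A := by
      by_contra! hall
      simp [eq_univ_of_forall hall, depth] at hT
    simp only [eval, ← mul_sum, sum_subcube_parityChar_eq_zero hi, mul_zero]
  | node i t₀ t₁ ih₀ ih₁ =>
    have ih : ∀ (b : Bool) {A : Finset (Fin n)} (a : Fin n → Bool),
        max t₀.depth t₁.depth + #A < n →
        ∑ z ∈ subcube A a, toSign ((cond b t₁ t₀).eval z) * parityChar z = 0 := by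
      rintro (_ | _) A a hA
      · exact ih₀ a (by omega)
      · exact ih₁ a (by omega)
    simp only [depth] at hT
    by_cases hi : i ∈ A
    · have hz : ∀ z ∈ subcube A a, z i = a i := fun z hz => mem_subcube.mp hz i hi
      rw [sum_congr rfl fun z h => by rw [eval_node_of_apply_eq (hz z h)]]
      exact ih (a i) a (by omega)
    · rw [← sum_fiberwise (subcube A a) (fun z => z i)]
      refine Fintype.sum_eq_zero _ fun b => ?_
      have hz : ∀ z ∈ subcube (insert i A) (Function.update a i b), z i = b := fun z hz => by
        simpa using mem_subcube.mp hz i (mem_insert_self i A)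
      rw [filter_subcube_apply_eq hi,
        sum_congr rfl fun z h => by rw [eval_node_of_apply_eq (hz z h)]]
      exact ih b _ (by rw [card_insert_of_notMem hi]; omega)

lemma parityCorrelation_eval_eq_zero {n : ℕ} (T : DTree n) (hT : T.depth < n) :
    parityCorrelation T.eval = 0 := by
  simpa [parityCorrelation] using
    T.sum_subcube_toSign_eval_mul_parityChar_eq_zero (A := ∅) (fun _ => false) (by simpa using hT)

end DTree

theorem stmt13_general (m : ℕ)
    (φ : (Fin m → Bool) → (Fin m → Bool)) (hφ : Function.Bijective φ)
    (h : (Fin m → Bool) → Bool)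
    (T : DTree (m + m)) (hcomp : T.Computes (MMBent φ h)) :
    m + m ≤ T.depth := by
  by_contra! hT
  have hf : T.eval = MMBent φ h := funext hcomp
  exact parityCorrelation_MMBent_ne_zero hφ h (hf ▸ T.parityCorrelation_eval_eq_zero hT)

/-- for `m ≥ 1`, every decision tree computing a
Maiorana–McFarland bent function on `n = m + m` variables has depth at least
`n`; i.e. its deterministic query complexity is `n`. -/
theorem stmt13 (m : ℕ) (hm : 1 ≤ m)
    (φ : (Fin m → Bool) → (Fin m → Bool)) (hφ : Function.Bijective φ)
    (h : (Fin m → Bool) → Bool)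
    (T : DTree (m + m)) (hcomp : T.Computes (MMBent φ h)) :
    m + m ≤ T.depth :=
  stmt13_general m φ hφ h T hcomp
end

section
/- Let m ≥ 1 and let f be a Maiorana–McFarland bent function on n = 2m variables, i.e. f(x, y) = (XOR over those i with φ(x) i = true of y i) XOR h(x) with φ bijective. Then f is computed by a parity decision tree of depth m + ⌈m/2⌉ = ⌈3n/4⌉. -/
/-!
Query the `m` variables of `x` one by one. Once `x` is known, `f` is the affine function
`y ↦ φ(x) · y XOR h(x)`, i.e. a constant XOR the parity of at most `m` variables, and a
parity decision tree computes such a function by querying those variables two at a time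
through XOR queries, in depth `⌈m/2⌉`. Padding with dummy queries makes the depth exact.
-/

open Finset

def parityOn {n : ℕ} (S : Finset (Fin n)) (z : Fin n → Bool) : Bool :=
  decide (Odd #{i ∈ S | z i = true})

section parityOn

variable {n : ℕ} {S : Finset (Fin n)} {z : Fin n → Bool}

@[simp]
lemma parityOn_empty : parityOn ∅ z = false := by
  simp [parityOn]

lemma parityOn_of_mem {i : Fin n} (hi : i ∈ S) :
    parityOn S z = xor (z i) (parityOn (S.erase i) z) := by
  unfold parityOn
  rw [filter_erase]
  by_cases hzi : z i = true
  · have hmem : i ∈ ({j ∈ S | z j = true} : Finset (Fin n)) := mem_filter.2 ⟨hi, hzi⟩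
    obtain ⟨k, hk⟩ := Nat.exists_eq_succ_of_ne_zero (card_ne_zero_of_mem hmem)
    rw [card_erase_of_mem hmem, hk, hzi, Nat.succ_sub_one]
    simp only [Nat.succ_eq_add_one, Nat.odd_add_one, decide_not, Bool.true_xor]
  · have hmem : i ∉ ({j ∈ S | z j = true} : Finset (Fin n)) := fun h => hzi (mem_filter.1 h).2
    rw [erase_eq_of_notMem hmem]
    simp [hzi]

end parityOn

namespace PDTree

variable {n : ℕ}

lemma exists_depth_eq_add_eval_eq (P : PDTree n) (i : Fin n) (k : ℕ) :
    ∃ Q : PDTree n, Q.depth = P.depth + k ∧ ∀ x, Q.eval x = P.eval x := by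
  induction k with
  | zero => exact ⟨P, rfl, fun _ => rfl⟩
  | succ k ih =>
    obtain ⟨Q, hQd, hQe⟩ := ih
    exact ⟨node1 i Q Q, by simp [depth, hQd, add_assoc], fun x => by simp [eval, hQe]⟩

lemma Computes.exists_depth_eq {P : PDTree n} {f : (Fin n → Bool) → Bool}
    (hP : P.Computes f) (i : Fin n) {d : ℕ} (hd : P.depth ≤ d) :
    ∃ Q : PDTree n, Q.depth = d ∧ Q.Computes f := by
  obtain ⟨Q, hQd, hQe⟩ := P.exists_depth_eq_add_eval_eq i (d - P.depth)
  exact ⟨Q, by omega, fun x => (hQe x).trans (hP x)⟩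

/-- Two variables of `S` are removed per query `z i XOR z j`. -/
lemma exists_computes_xor_parityOn (d : ℕ) :
    ∀ (S : Finset (Fin n)) (c : Bool), #S ≤ 2 * d →
      ∃ P : PDTree n, P.depth ≤ d ∧ P.Computes fun z => xor c (parityOn S z) := by
  induction d with
  | zero =>
    intro S c hS
    rw [card_eq_zero.1 (show #S = 0 by omega)]
    exact ⟨leaf c, le_rfl, fun z => by simp [eval]⟩
  | succ d ih =>
    intro S c hS
    obtain rfl | ⟨i, hi⟩ := S.eq_empty_or_nonempty
    · exact ⟨leaf c, Nat.zero_le _, fun z => by simp [eval]⟩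
    obtain hS' | ⟨j, hj⟩ := (S.erase i).eq_empty_or_nonempty
    · refine ⟨node1 i (leaf c) (leaf !c), by simp [depth], fun z => ?_⟩
      change _ = xor c (parityOn S z)
      rw [parityOn_of_mem hi, hS']
      cases hzi : z i <;> simp [eval, hzi]
    · have hcard : #((S.erase i).erase j) ≤ 2 * d := by
        rw [card_erase_of_mem hj, card_erase_of_mem hi]
        omega
      obtain ⟨P₀, hP₀d, hP₀⟩ := ih _ c hcard
      obtain ⟨P₁, hP₁d, hP₁⟩ := ih _ (!c) hcard
      refine ⟨node2 i j P₀ P₁, by simp [depth, hP₀d, hP₁d], fun z => ?_⟩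
      change _ = xor c (parityOn S z)
      rw [parityOn_of_mem hi, parityOn_of_mem hj]
      cases hzi : z i <;> cases hzj : z j <;> simp [eval, hzi, hzj, hP₀ z, hP₁ z]

lemma eq_update_of_mem_insert {T : Finset (Fin n)} {z z₀ : Fin n → Bool} (a : Fin n)
    (hz : ∀ i ∈ T, z i = z₀ i) : ∀ i ∈ insert a T, z i = Function.update z₀ a (z a) i := by
  intro j hj
  by_cases hja : j = a
  · subst hja; simp
  · rw [Function.update_of_ne hja]
    exact hz j ((mem_insert.1 hj).resolve_left hja)

lemma exists_computes_of_forall_subcube (T : Finset (Fin n)) {f : (Fin n → Bool) → Bool}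
    {d : ℕ} (hf : ∀ z₀ : Fin n → Bool, ∃ P : PDTree n, P.depth ≤ d ∧
      ∀ z, (∀ i ∈ T, z i = z₀ i) → P.eval z = f z) :
    ∃ P : PDTree n, P.depth ≤ #T + d ∧ P.Computes f := by
  classical
  induction T using Finset.induction_on generalizing d with
  | empty =>
    obtain ⟨P, hPd, hP⟩ := hf fun _ => false
    exact ⟨P, by simpa using hPd, fun z => hP z (by simp)⟩
  | insert a T haT ih =>
    choose P hPd hP using hf
    obtain ⟨Q, hQd, hQ⟩ := ih (d := d + 1) fun z₀ =>
      ⟨node1 a (P (Function.update z₀ a false)) (P (Function.update z₀ a true)),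
        by simp [depth, hPd], fun z hz => by
          have := hP _ z (eq_update_of_mem_insert a hz)
          cases hza : z a <;> simp_all [eval]⟩
    exact ⟨Q, by rw [card_insert_of_notMem haT]; omega, hQ⟩

end PDTree

section MMBent

variable {m : ℕ}

lemma parityDot_eq_parityOn (a : Fin m → Bool) (z : Fin (m + m) → Bool) :
    parityDot a (fun i => z (Fin.natAdd m i)) =
      parityOn (({i | a i = true} : Finset (Fin m)).map (Fin.natAddEmb m)) z := by
  unfold parityDot parityOn
  rw [filter_map, card_map, filter_filter]
  rfl

lemma MMBent_eq_xor_parityOn (φ : (Fin m → Bool) → (Fin m → Bool))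
    (h : (Fin m → Bool) → Bool) {z : Fin (m + m) → Bool} {x₀ : Fin m → Bool}
    (hx : ∀ i, z (Fin.castAdd m i) = x₀ i) :
    MMBent φ h z =
      xor (h x₀) (parityOn (({i | φ x₀ i = true} : Finset (Fin m)).map (Fin.natAddEmb m)) z) := by
  rw [MMBent, funext hx, parityDot_eq_parityOn, Bool.xor_comm]

lemma exists_computes_MMBent_of_forall_eq (φ : (Fin m → Bool) → (Fin m → Bool))
    (h : (Fin m → Bool) → Bool) (z₀ : Fin (m + m) → Bool) :
    ∃ P : PDTree (m + m), P.depth ≤ (m + 1) / 2 ∧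
      ∀ z, (∀ i ∈ univ.map (Fin.castAddEmb m), z i = z₀ i) → P.eval z = MMBent φ h z := by
  set x₀ : Fin m → Bool := fun i => z₀ (Fin.castAdd m i)
  have hcard : #(({i | φ x₀ i = true} : Finset (Fin m)).map (Fin.natAddEmb m)) ≤
      2 * ((m + 1) / 2) := by
    rw [card_map]
    exact (card_filter_le _ _).trans (by simp; omega)
  obtain ⟨P, hPd, hP⟩ := PDTree.exists_computes_xor_parityOn _ _ (h x₀) hcard
  exact ⟨P, hPd, fun z hz =>
    (hP z).trans (MMBent_eq_xor_parityOn φ h fun i => hz _ (by simp)).symm⟩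

end MMBent

theorem stmt14_general (m : ℕ) (hm : 1 ≤ m)
    (φ : (Fin m → Bool) → (Fin m → Bool))
    (h : (Fin m → Bool) → Bool) :
    ∃ P : PDTree (m + m), P.depth = m + (m + 1) / 2 ∧ P.Computes (MMBent φ h) := by
  obtain ⟨P, hPd, hP⟩ :=
    PDTree.exists_computes_of_forall_subcube _ (exists_computes_MMBent_of_forall_eq φ h)
  exact hP.exists_depth_eq (Fin.castAdd m ⟨0, hm⟩) (by simpa using hPd)

/-- for `m ≥ 1`, every Maiorana–McFarland bent function on
`n = m + m` variables is computed by a parity decision tree of depth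
`m + ⌈m/2⌉ = ⌈3n/4⌉`. -/
theorem stmt14 (m : ℕ) (hm : 1 ≤ m)
    (φ : (Fin m → Bool) → (Fin m → Bool)) (hφ : Function.Bijective φ)
    (h : (Fin m → Bool) → Bool) :
    ∃ P : PDTree (m + m), P.depth = m + (m + 1) / 2 ∧ P.Computes (MMBent φ h) :=
  stmt14_general m hm φ h
end

section
/- Let k ≥ 2 and let f be a Boolean function on n = 2^k − 1 variables, all of whose variables are influencing. Then f is not computed by any parity decision tree of depth k − 1. (Consequently there is no Boolean function with 2^k − 1 influencing variables that is completely described by a parity decision tree of depth less than k.) -/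
/-!
A parity decision tree of depth `d` mentions at most `2 ^ (d + 1) - 2` variables, since each of
its at most `2 ^ d - 1` internal nodes queries at most two of them. A tree computing `f` must
mention every influencing variable of `f`, as its output does not depend on the others.
For `n = 2 ^ k - 1` and depth `k - 1` this leaves at most `2 ^ k - 2 < n` variables.
-/

namespace PDTree

variable {n : ℕ}

def vars : PDTree n → Finset (Fin n)
  | leaf _ => ∅
  | node1 i t0 t1 => insert i (vars t0 ∪ vars t1)
  | node2 i j t0 t1 => insert i (insert j (vars t0 ∪ vars t1))

theorem card_vars_add_two_le (T : PDTree n) : T.vars.card + 2 ≤ 2 ^ (T.depth + 1) := by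
  induction T with
  | leaf => simp [vars, depth]
  | node1 i t0 t1 ih0 ih1 =>
    have h0 : t0.vars.card + 2 ≤ 2 ^ (max t0.depth t1.depth + 1) :=
      ih0.trans (Nat.pow_le_pow_right two_pos (by omega))
    have h1 : t1.vars.card + 2 ≤ 2 ^ (max t0.depth t1.depth + 1) :=
      ih1.trans (Nat.pow_le_pow_right two_pos (by omega))
    have hcard := (Finset.card_insert_le i _).trans
      (Nat.add_le_add_right (Finset.card_union_le t0.vars t1.vars) 1)
    rw [vars, depth, pow_succ]
    omega
  | node2 i j t0 t1 ih0 ih1 =>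
    have h0 : t0.vars.card + 2 ≤ 2 ^ (max t0.depth t1.depth + 1) :=
      ih0.trans (Nat.pow_le_pow_right two_pos (by omega))
    have h1 : t1.vars.card + 2 ≤ 2 ^ (max t0.depth t1.depth + 1) :=
      ih1.trans (Nat.pow_le_pow_right two_pos (by omega))
    have hcard := (Finset.card_insert_le i _).trans <| Nat.add_le_add_right
      ((Finset.card_insert_le j _).trans
        (Nat.add_le_add_right (Finset.card_union_le t0.vars t1.vars) 1)) 1
    rw [vars, depth, pow_succ]
    omega

theorem eval_congr (T : PDTree n) {x x' : Fin n → Bool} (h : ∀ j ∈ T.vars, x j = x' j) :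
    T.eval x = T.eval x' := by
  induction T with
  | leaf => rfl
  | node1 i t0 t1 ih0 ih1 =>
    simp only [vars, Finset.mem_insert, Finset.mem_union] at h
    simp only [eval, h i (.inl rfl), ih0 fun j hj => h j (.inr (.inl hj)),
      ih1 fun j hj => h j (.inr (.inr hj))]
  | node2 i j t0 t1 ih0 ih1 =>
    simp only [vars, Finset.mem_insert, Finset.mem_union] at h
    simp only [eval, h i (.inl rfl), h j (.inr (.inl rfl)),
      ih0 fun m hm => h m (.inr (.inr (.inl hm))), ih1 fun m hm => h m (.inr (.inr (.inr hm)))]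

theorem Computes.mem_vars {T : PDTree n} {f : (Fin n → Bool) → Bool} (hT : T.Computes f)
    {i : Fin n} (hi : Influences f i) : i ∈ T.vars := by
  by_contra hiT
  obtain ⟨x, x', hxx', hne⟩ := hi
  refine hne ?_
  rw [← hT x, ← hT x']
  exact T.eval_congr fun j hj => hxx' j (ne_of_mem_of_not_mem hj hiT)

theorem Computes.add_two_le_two_pow {T : PDTree n} {f : (Fin n → Bool) → Bool}
    (hT : T.Computes f) (hf : ∀ i, Influences f i) : n + 2 ≤ 2 ^ (T.depth + 1) := by
  have hcard : n ≤ T.vars.card := by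
    simpa using Finset.card_le_card fun i (_ : i ∈ Finset.univ) => hT.mem_vars (hf i)
  have := T.card_vars_add_two_le
  omega

end PDTree

/-- for `k ≥ 2`, no Boolean function on `2^k - 1` variables, all
of whose variables are influencing, is computed by a parity decision tree of
depth `k - 1` (or less). -/
theorem stmt17 (k : ℕ) (hk : 2 ≤ k) (f : (Fin (2 ^ k - 1) → Bool) → Bool)
    (hinf : ∀ i, Influences f i)
    (P : PDTree (2 ^ k - 1)) (hdepth : P.depth ≤ k - 1) :
    ¬ P.Computes f := by
  intro hP
  have hbound := hP.add_two_le_two_pow hinf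
  have hpow : 2 ^ (P.depth + 1) ≤ 2 ^ k := Nat.pow_le_pow_right two_pos (by omega)
  have hk1 : 1 ≤ 2 ^ k := Nat.one_le_two_pow
  omega
end
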